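/- arXiv:math/0611510 — 2 statements merged into one kernel-verified Lean document; each statement's English description precedes it below -/
import Mathlib

section
/- Let σ = (Z, P) be a stability condition on a triangulated category D and let E be a nonzero object of D. Suppose given two Harder–Narasimhan filtrations of E: triangles E_{j-1} → E_j → A_j with E₀ = 0, E_n = E, A_j a nonzero object of P(φ_j) and φ₁ > ... > φ_n, and triangles E'_{k-1} → E'_k → B_k with E'₀ = 0, E'_m = E, B_k a nonzero object of P(ψ_k) and ψ₁ > ... > ψ_m. Then n = m, φ_j = ψ_j for all j, and E_j ≅ E'_j and A_j ≅ B_j for all j; that is, the decomposition of axiom (d) is uniquely defined up to isomorphism. -/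
/-!
Basic definitions: Bridgeland stability conditions on a triangulated category.

The Grothendieck group `K(D)` is encoded implicitly: a group homomorphism `K(D) → ℂ`
is the same thing as a function on objects which is invariant under isomorphism and
additive on distinguished triangles.
-/

open CategoryTheory CategoryTheory.Limits CategoryTheory.Pretriangulated
open scoped ENNReal Classical

universe v u

variable (C : Type u) [Category.{v} C] [HasZeroObject C] [HasShift C ℤ]
  [Preadditive C] [∀ n : ℤ, (CategoryTheory.shiftFunctor C n).Additive] [Pretriangulated C]

/-- A Harder–Narasimhan filtration of an object `E` with respect to a collection of
subcategories `P φ`: a finite sequence of triangles `E_{j-1} → E_j → A_j` with `E₀ = 0`,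
`E_n = E`, and `A_j` a nonzero object of `P φ_j`, where `φ₁ > φ₂ > ⋯ > φ_n`. -/
structure HNFiltration (P : ℝ → Set C) (E : C) where
  n : ℕ
  npos : 0 < n
  phase : Fin n → ℝ
  phase_anti : ∀ ⦃i j : Fin n⦄, i < j → phase j < phase i
  obj : Fin (n + 1) → C
  obj_zero : IsZero (obj 0)
  obj_last : obj (Fin.last n) = E
  A : Fin n → C
  A_mem : ∀ j, A j ∈ P (phase j)
  A_nonzero : ∀ j, ¬ IsZero (A j)
  map : ∀ j : Fin n, obj j.castSucc ⟶ obj j.succ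
  distinguished : ∀ j : Fin n,
    ∃ (g : obj j.succ ⟶ A j) (h : A j ⟶ (obj j.castSucc)⟦(1 : ℤ)⟧),
      Triangle.mk (map j) g h ∈ distTriang C

/-- A stability condition `σ = (Z, P)` on a triangulated category, in the sense of
Bridgeland.  `Z` is the central charge (a group homomorphism `K(D) → ℂ`, encoded as an
isomorphism-invariant function on objects additive on distinguished triangles), and the
`P φ` are strictly full additive subcategories (encoded by their classes of objects,
closed under isomorphism and containing the zero objects), satisfying axioms (a)-(d). -/
structure StabilityCondition where
  Z : C → ℂ
  P : ℝ → Set C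
  Z_iso_invariant : ∀ ⦃X Y : C⦄, (X ≅ Y) → Z X = Z Y
  Z_additive : ∀ T ∈ distTriang C, Z (Triangle.obj₂ T) = Z T.obj₁ + Z T.obj₃
  P_isoClosed : ∀ (φ : ℝ) ⦃X Y : C⦄, (X ≅ Y) → X ∈ P φ → Y ∈ P φ
  P_zero_mem : ∀ (φ : ℝ) (Z₀ : C), IsZero Z₀ → Z₀ ∈ P φ
  P_phase : ∀ (φ : ℝ) (E : C), E ∈ P φ → ¬ IsZero E →
    ∃ m : ℝ, 0 < m ∧ Z E = (m : ℂ) * Complex.exp ((Real.pi * φ : ℝ) * Complex.I)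
  P_shift : ∀ (φ : ℝ) (E : C), E ∈ P (φ + 1) ↔ ∃ F ∈ P φ, Nonempty (E ≅ F⟦(1 : ℤ)⟧)
  hom_vanishing : ∀ ⦃φ₁ φ₂ : ℝ⦄, φ₂ < φ₁ → ∀ ⦃A₁ A₂ : C⦄, A₁ ∈ P φ₁ → A₂ ∈ P φ₂ →
    ∀ f : A₁ ⟶ A₂, f = 0
  HN : ∀ E : C, ¬ IsZero E → Nonempty (HNFiltration C P E)

namespace StabilityCondition

variable {C}

/-- The largest phase `φ⁺_σ(E)` occurring in the HN filtration of a nonzero object `E`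
(junk value `0` on zero objects). -/
noncomputable def phiPlus (σ : StabilityCondition C) (E : C) : ℝ :=
  if h : ¬ IsZero E then (σ.HN E h).some.phase ⟨0, (σ.HN E h).some.npos⟩ else 0

/-- The smallest phase `φ⁻_σ(E)` occurring in the HN filtration of a nonzero object `E`
(junk value `0` on zero objects). -/
noncomputable def phiMinus (σ : StabilityCondition C) (E : C) : ℝ :=
  if h : ¬ IsZero E then
    (σ.HN E h).some.phase ⟨(σ.HN E h).some.n - 1, Nat.sub_lt (σ.HN E h).some.npos one_pos⟩
  else 0

/-- The mass `m_σ(E) = ∑ᵢ |Z(Aᵢ)|` of a nonzero object `E`, where the `Aᵢ` are its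
HN factors (junk value `0` on zero objects). -/
noncomputable def mass (σ : StabilityCondition C) (E : C) : ℝ :=
  if h : ¬ IsZero E then ∑ j, ‖σ.Z ((σ.HN E h).some.A j)‖ else 0

/-- The generalized ([0,∞]-valued) metric on stability conditions:
`d(σ₁,σ₂) = sup_{0 ≠ E} max ( |φ⁻₂(E) − φ⁻₁(E)|, |φ⁺₂(E) − φ⁺₁(E)|, |log (m₂(E)/m₁(E))| )`. -/
noncomputable def stabDist (σ τ : StabilityCondition C) : ℝ≥0∞ :=
  ⨆ E : {E : C // ¬ IsZero E},
    ENNReal.ofReal (max |τ.phiMinus E.1 - σ.phiMinus E.1|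
      (max |τ.phiPlus E.1 - σ.phiPlus E.1| |Real.log (τ.mass E.1 / σ.mass E.1)|))

end StabilityCondition

/-- The smallest extension-closed (strictly) full subcategory of `D` containing a given
class `S` of objects: closed under isomorphisms, containing zero, and closed under
extensions (distinguished triangles). -/
inductive ExtClosure (S : Set C) : C → Prop
  | of {E : C} (hE : E ∈ S) : ExtClosure S E
  | zero {E : C} (hE : IsZero E) : ExtClosure S E
  | iso {E F : C} (e : E ≅ F) (hE : ExtClosure S E) : ExtClosure S F
  | ext (T : Triangle C) (hT : T ∈ distTriang C) (h₁ : ExtClosure S T.obj₁)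
      (h₃ : ExtClosure S T.obj₃) : ExtClosure S T.obj₂

/-- `P(I)`: the smallest extension-closed full subcategory of `D` containing the
subcategories `P φ` for `φ ∈ I`. -/
def PInterval (σ : StabilityCondition C) (I : Set ℝ) : Set C :=
  {E | ExtClosure C {F | ∃ φ ∈ I, F ∈ σ.P φ} E}

/-- `A` is a proper strict subobject of `E` in the quasi-abelian full subcategory with
class of objects `S`: there is a distinguished triangle `A → E → B` with all vertices
in `S` and `B` nonzero. -/
def ProperStrictSub (S : Set C) (A E : C) : Prop :=
  A ∈ S ∧ E ∈ S ∧ ∃ (B : C) (f : A ⟶ E) (g : E ⟶ B) (h : B ⟶ A⟦(1 : ℤ)⟧),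
    B ∈ S ∧ ¬ IsZero B ∧ Triangle.mk f g h ∈ distTriang C

/-- `B` is a proper strict quotient of `E` in the quasi-abelian full subcategory with
class of objects `S`. -/
def ProperStrictQuot (S : Set C) (B E : C) : Prop :=
  B ∈ S ∧ E ∈ S ∧ ∃ (A : C) (f : A ⟶ E) (g : E ⟶ B) (h : B ⟶ A⟦(1 : ℤ)⟧),
    A ∈ S ∧ ¬ IsZero A ∧ Triangle.mk f g h ∈ distTriang C

/-- A full subcategory (given by a class `S` of objects) is of finite length if it
satisfies both chain conditions on strict subobjects: the proper strict subobject
relation and the proper strict quotient relation are well-founded (DCC and ACC). -/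
def FiniteLengthQuasiAbelian (S : Set C) : Prop :=
  WellFounded (fun A E => ProperStrictSub C S A E) ∧
  WellFounded (fun B E => ProperStrictQuot C S B E)

/-- A stability condition is locally finite if for some `ε > 0` each of the
quasi-abelian categories `P((φ−ε, φ+ε))` is of finite length. -/
def StabilityCondition.LocallyFinite (σ : StabilityCondition C) : Prop :=
  ∃ ε : ℝ, 0 < ε ∧ ∀ φ : ℝ,
    FiniteLengthQuasiAbelian C (PInterval C σ (Set.Ioo (φ - ε) (φ + ε)))

/-- The space `Stab(D)` of locally finite stability conditions on `D`. -/
def Stab := {σ : StabilityCondition C // σ.LocallyFinite C}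

/-- The topology on `Stab(D)` induced by the generalized metric `d`: generated by the
open balls. -/
noncomputable instance : TopologicalSpace (Stab C) :=
  TopologicalSpace.generateFrom
    {U : Set (Stab C) | ∃ (σ : Stab C) (ε : ℝ≥0∞), 0 < ε ∧
      U = {τ : Stab C | StabilityCondition.stabDist σ.1 τ.1 < ε}}

/-- The heart `P((0,1])` of a stability condition. -/
def heartSet (σ : StabilityCondition C) : Set C :=
  PInterval C σ (Set.Ioc (0 : ℝ) 1)


/-
The top triangles `E_{n-1} → E → A_n` and `E'_{m-1} → E → B_m` of two HN filtrations are
compared. The map `E → A_n` is nonzero because `Hom(E_{n-1}[1], A_n) = 0`, while `E` has no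
nonzero maps to a semistable object of phase smaller than all `ψ_k`; hence `φ_n = ψ_m`. Then
each of `E → A_n`, `E → B_m` factors through the other, the factorizations are mutually inverse
(again since `Hom(E_{n-1}[1], A_n) = 0`), and the five lemma gives `E_{n-1} ≅ E'_{m-1}`.
Induction on `n` finishes the proof.
-/

section

variable {C}

lemma hom_eq_zero_of_forall_factor {n : ℕ} {X : Fin (n + 1) → C} {A : Fin n → C}
    (u : ∀ j : Fin n, X j.castSucc ⟶ X j.succ) (hX : IsZero (X 0))
    (hT : ∀ j, ∃ (g : X j.succ ⟶ A j) (h : A j ⟶ (X j.castSucc)⟦(1 : ℤ)⟧),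
      Triangle.mk (u j) g h ∈ distTriang C)
    {W : C} (k : Fin (n + 1)) (hA : ∀ j : Fin n, j.castSucc < k → ∀ g : A j ⟶ W, g = 0)
    (f : X k ⟶ W) : f = 0 := by
  induction k using Fin.induction with
  | zero => exact hX.eq_of_src f 0
  | succ i ih =>
    obtain ⟨g, h, hT⟩ := hT i
    have hu : u i ≫ f = 0 := ih (fun j hj => hA j (hj.trans Fin.castSucc_lt_succ)) _
    obtain ⟨g', rfl⟩ := Triangle.yoneda_exact₂ _ hT f hu
    obtain rfl := hA i Fin.castSucc_lt_succ g'
    exact comp_zero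

end

namespace HNFiltration

variable {C} {P : ℝ → Set C} {E : C} (F : HNFiltration C P E)

noncomputable def toFactor (j : Fin F.n) : F.obj j.succ ⟶ F.A j :=
  (F.distinguished j).choose

noncomputable def triangle (j : Fin F.n) : Triangle C :=
  Triangle.mk (F.map j) (F.toFactor j) (F.distinguished j).choose_spec.choose

lemma triangle_distinguished (j : Fin F.n) : F.triangle j ∈ distTriang C :=
  (F.distinguished j).choose_spec.choose_spec

lemma hom_obj_eq_zero {W : C} (k : Fin (F.n + 1))
    (hA : ∀ j : Fin F.n, j.castSucc < k → ∀ g : F.A j ⟶ W, g = 0) (f : F.obj k ⟶ W) :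
    f = 0 :=
  hom_eq_zero_of_forall_factor F.map F.obj_zero F.distinguished k hA f

lemma hom_shift_obj_eq_zero {W : C} (k : Fin (F.n + 1))
    (hA : ∀ j : Fin F.n, j.castSucc < k → ∀ g : (F.A j)⟦(1 : ℤ)⟧ ⟶ W, g = 0)
    (f : (F.obj k)⟦(1 : ℤ)⟧ ⟶ W) : f = 0 := by
  refine hom_eq_zero_of_forall_factor (X := fun i => (F.obj i)⟦(1 : ℤ)⟧)
    (fun j => (1 : ℤ).negOnePow • (F.map j)⟦(1 : ℤ)⟧')
    ((shiftFunctor C (1 : ℤ)).map_isZero F.obj_zero) (fun j => ?_) k hA f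
  obtain ⟨g, h, hT⟩ := F.distinguished j
  exact ⟨_, _, Triangle.shift_distinguished _ hT 1⟩

structure AgreeUpTo {E₁ E₂ : C} (F₁ : HNFiltration C P E₁) (F₂ : HNFiltration C P E₂)
    (k : ℕ) : Prop where
  phase_eq : ∀ (j₁ : Fin F₁.n) (j₂ : Fin F₂.n), (j₁ : ℕ) = j₂ → (j₁ : ℕ) < k →
    F₁.phase j₁ = F₂.phase j₂
  nonempty_iso_A : ∀ (j₁ : Fin F₁.n) (j₂ : Fin F₂.n), (j₁ : ℕ) = j₂ → (j₁ : ℕ) < k →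
    Nonempty (F₁.A j₁ ≅ F₂.A j₂)
  nonempty_iso_obj : ∀ (i₁ : Fin (F₁.n + 1)) (i₂ : Fin (F₂.n + 1)), (i₁ : ℕ) = i₂ →
    (i₁ : ℕ) ≤ k → Nonempty (F₁.obj i₁ ≅ F₂.obj i₂)

namespace AgreeUpTo

variable {E₁ E₂ : C} {F₁ : HNFiltration C P E₁} {F₂ : HNFiltration C P E₂}

lemma zero : AgreeUpTo F₁ F₂ 0 where
  phase_eq _ _ _ h := absurd h (Nat.not_lt_zero _)
  nonempty_iso_A _ _ _ h := absurd h (Nat.not_lt_zero _)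
  nonempty_iso_obj i₁ i₂ hi h := by
    obtain rfl : i₁ = 0 := Fin.ext (Nat.le_zero.1 h)
    obtain rfl : i₂ = 0 := Fin.ext (by simpa using hi.symm)
    exact ⟨F₁.obj_zero.iso F₂.obj_zero⟩

lemma succ {j₁ : Fin F₁.n} {j₂ : Fin F₂.n} (h : AgreeUpTo F₁ F₂ j₁) (hj : (j₁ : ℕ) = j₂)
    (hφ : F₁.phase j₁ = F₂.phase j₂) (hA : Nonempty (F₁.A j₁ ≅ F₂.A j₂))
    (hobj : Nonempty (F₁.obj j₁.succ ≅ F₂.obj j₂.succ)) : AgreeUpTo F₁ F₂ (j₁ + 1) where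
  phase_eq i₁ i₂ hi hlt := by
    rcases Nat.lt_succ_iff_lt_or_eq.1 hlt with hlt | heq
    · exact h.phase_eq i₁ i₂ hi hlt
    · obtain rfl : i₁ = j₁ := Fin.ext heq
      obtain rfl : i₂ = j₂ := Fin.ext (by omega)
      exact hφ
  nonempty_iso_A i₁ i₂ hi hlt := by
    rcases Nat.lt_succ_iff_lt_or_eq.1 hlt with hlt | heq
    · exact h.nonempty_iso_A i₁ i₂ hi hlt
    · obtain rfl : i₁ = j₁ := Fin.ext heq
      obtain rfl : i₂ = j₂ := Fin.ext (by omega)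
      exact hA
  nonempty_iso_obj i₁ i₂ hi hle := by
    rcases Nat.le_succ_iff.1 hle with hle | heq
    · exact h.nonempty_iso_obj i₁ i₂ hi hle
    · obtain rfl : i₁ = j₁.succ := Fin.ext (by simpa using heq)
      obtain rfl : i₂ = j₂.succ := Fin.ext (by rw [Fin.val_succ]; omega)
      exact hobj

end AgreeUpTo

end HNFiltration

namespace StabilityCondition

variable {C}

lemma shift_mem (σ : StabilityCondition C) {A : C} {φ : ℝ} (h : A ∈ σ.P φ) :
    A⟦(1 : ℤ)⟧ ∈ σ.P (φ + 1) :=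
  (σ.P_shift φ _).2 ⟨A, h, ⟨Iso.refl _⟩⟩

end StabilityCondition

namespace HNFiltration

variable {C} {σ : StabilityCondition C} {E : C} (F : HNFiltration C σ.P E)

lemma phase_strictAnti : StrictAnti F.phase := F.phase_anti

lemma hom_obj_castSucc_eq_zero (j : Fin F.n) {W : C} {ψ : ℝ} (hW : W ∈ σ.P ψ)
    (hψ : ψ ≤ F.phase j) (f : F.obj j.castSucc ⟶ W) : f = 0 :=
  F.hom_obj_eq_zero _ (fun i hi g => σ.hom_vanishing
    (hψ.trans_lt (F.phase_anti (Fin.castSucc_lt_castSucc_iff.1 hi))) (F.A_mem i) hW g) f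

lemma hom_obj_succ_eq_zero (j : Fin F.n) {W : C} {ψ : ℝ} (hW : W ∈ σ.P ψ)
    (hψ : ψ < F.phase j) (f : F.obj j.succ ⟶ W) : f = 0 :=
  F.hom_obj_eq_zero _ (fun i hi g => σ.hom_vanishing
    (hψ.trans_le (F.phase_strictAnti.antitone (Fin.castSucc_lt_succ_iff.1 hi)))
    (F.A_mem i) hW g) f

lemma hom_shift_obj_castSucc_eq_zero (j : Fin F.n) {W : C} {ψ : ℝ} (hW : W ∈ σ.P ψ)
    (hψ : ψ ≤ F.phase j + 1) (f : (F.obj j.castSucc)⟦(1 : ℤ)⟧ ⟶ W) : f = 0 :=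
  F.hom_shift_obj_eq_zero _ (fun i hi g => σ.hom_vanishing
    (hψ.trans_lt (by linarith [F.phase_anti (Fin.castSucc_lt_castSucc_iff.1 hi)]))
    (σ.shift_mem (F.A_mem i)) hW g) f

lemma eq_zero_of_toFactor_comp_eq_zero (j : Fin F.n) {W : C} {ψ : ℝ} (hW : W ∈ σ.P ψ)
    (hψ : ψ ≤ F.phase j + 1) (f : F.A j ⟶ W) (hf : F.toFactor j ≫ f = 0) : f = 0 := by
  obtain ⟨g, rfl⟩ := Triangle.yoneda_exact₃ _ (F.triangle_distinguished j) f hf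
  obtain rfl := F.hom_shift_obj_castSucc_eq_zero j hW hψ g
  exact comp_zero

lemma eq_id_of_toFactor_comp_eq (j : Fin F.n) {f : F.A j ⟶ F.A j}
    (hf : F.toFactor j ≫ f = F.toFactor j) : f = 𝟙 _ :=
  sub_eq_zero.1 <| F.eq_zero_of_toFactor_comp_eq_zero j (F.A_mem j) (by linarith) _ <| by
    rw [Preadditive.comp_sub, hf, Category.comp_id, sub_self]

lemma toFactor_ne_zero (j : Fin F.n) : F.toFactor j ≠ 0 := fun h =>
  F.A_nonzero j <| (IsZero.iff_id_eq_zero _).2 <|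
    F.eq_zero_of_toFactor_comp_eq_zero j (F.A_mem j) (by linarith) _ (by rw [h, zero_comp])

lemma not_isZero_obj_succ (j : Fin F.n) : ¬ IsZero (F.obj j.succ) := fun h =>
  F.toFactor_ne_zero j (h.eq_of_src _ _)

section Comparison

variable {E₁ E₂ : C} {F₁ : HNFiltration C σ.P E₁} {F₂ : HNFiltration C σ.P E₂}
  {j₁ : Fin F₁.n} {j₂ : Fin F₂.n}

lemma phase_le_of_iso (e : F₁.obj j₁.succ ≅ F₂.obj j₂.succ) : F₂.phase j₂ ≤ F₁.phase j₁ := by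
  by_contra! h
  apply F₁.toFactor_ne_zero j₁
  have h0 : e.inv ≫ F₁.toFactor j₁ = 0 := F₂.hom_obj_succ_eq_zero j₂ (F₁.A_mem j₁) h _
  rw [← e.hom_inv_id_assoc (F₁.toFactor j₁), h0, comp_zero]

lemma phase_eq_of_iso (e : F₁.obj j₁.succ ≅ F₂.obj j₂.succ) : F₁.phase j₁ = F₂.phase j₂ :=
  le_antisymm (phase_le_of_iso e.symm) (phase_le_of_iso e)

lemma exists_toFactor_comp_eq (e : F₁.obj j₁.succ ≅ F₂.obj j₂.succ)
    (h : F₂.phase j₂ ≤ F₁.phase j₁) :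
    ∃ β : F₁.A j₁ ⟶ F₂.A j₂, e.hom ≫ F₂.toFactor j₂ = F₁.toFactor j₁ ≫ β :=
  Triangle.yoneda_exact₂ _ (F₁.triangle_distinguished j₁) _
    (F₁.hom_obj_castSucc_eq_zero j₁ (F₂.A_mem j₂) h _)

lemma exists_iso_A_of_iso (e : F₁.obj j₁.succ ≅ F₂.obj j₂.succ) :
    ∃ β : F₁.A j₁ ≅ F₂.A j₂, e.hom ≫ F₂.toFactor j₂ = F₁.toFactor j₁ ≫ β.hom := by
  have hφ := phase_eq_of_iso e
  obtain ⟨β, hβ⟩ := exists_toFactor_comp_eq e hφ.ge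
  obtain ⟨γ, hγ⟩ := exists_toFactor_comp_eq e.symm hφ.le
  rw [Iso.symm_hom] at hγ
  refine ⟨⟨β, γ, F₁.eq_id_of_toFactor_comp_eq j₁ ?_, F₂.eq_id_of_toFactor_comp_eq j₂ ?_⟩, hβ⟩
  · rw [← Category.assoc, ← hβ, Category.assoc, ← hγ, e.hom_inv_id_assoc]
  · rw [← Category.assoc, ← hγ, Category.assoc, ← hβ, e.inv_hom_id_assoc]

lemma nonempty_iso_obj_castSucc_of_iso (e : F₁.obj j₁.succ ≅ F₂.obj j₂.succ) :
    Nonempty (F₁.obj j₁.castSucc ≅ F₂.obj j₂.castSucc) := by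
  obtain ⟨β, hβ⟩ := exists_iso_A_of_iso e
  obtain ⟨a, ha₁, ha₃⟩ := complete_distinguished_triangle_morphism₁ _ _
    (F₁.triangle_distinguished j₁) (F₂.triangle_distinguished j₂) e.hom β.hom hβ.symm
  have : IsIso a := isIso₁_of_isIso₂₃ (Triangle.homMk _ _ a e.hom β.hom ha₁ hβ.symm ha₃)
    (F₁.triangle_distinguished j₁) (F₂.triangle_distinguished j₂) e.isIso_hom β.isIso_hom
  exact ⟨(asIso a :)⟩

end Comparison

theorem agreeUpTo_of_iso {E₁ E₂ : C} {F₁ : HNFiltration C σ.P E₁} {F₂ : HNFiltration C σ.P E₂}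
    (k₁ : Fin (F₁.n + 1)) (k₂ : Fin (F₂.n + 1)) (e : F₁.obj k₁ ≅ F₂.obj k₂) :
    (k₁ : ℕ) = k₂ ∧ AgreeUpTo F₁ F₂ k₁ := by
  induction k₁ using Fin.induction generalizing k₂ with
  | zero =>
    cases k₂ using Fin.cases with
    | zero => exact ⟨rfl, .zero⟩
    | succ i₂ => exact absurd (F₁.obj_zero.of_iso e.symm) (F₂.not_isZero_obj_succ i₂)
  | succ i₁ ih =>
    cases k₂ using Fin.cases with
    | zero => exact absurd (F₂.obj_zero.of_iso e) (F₁.not_isZero_obj_succ i₁)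
    | succ i₂ =>
      obtain ⟨e'⟩ := nonempty_iso_obj_castSucc_of_iso e
      obtain ⟨hi, hagree⟩ := ih i₂.castSucc e'
      obtain ⟨β, -⟩ := exists_iso_A_of_iso e
      simp only [Fin.val_castSucc] at hi hagree
      exact ⟨by simp [hi], hagree.succ hi (phase_eq_of_iso e) ⟨β⟩ ⟨e⟩⟩

end HNFiltration

/-- the Harder–Narasimhan filtration of a nonzero object is unique up to
isomorphism: two HN filtrations have the same length, the same phases, and isomorphic
objects and factors. -/
theorem statement1 (σ : StabilityCondition C) (E : C)
    (F₁ F₂ : HNFiltration C σ.P E) :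
    ∃ h : F₁.n = F₂.n,
      (∀ j : Fin F₁.n, F₁.phase j = F₂.phase (Fin.cast h j)) ∧
      (∀ j : Fin (F₁.n + 1), Nonempty (F₁.obj j ≅ F₂.obj (Fin.cast (by rw [h]) j))) ∧
      (∀ j : Fin F₁.n, Nonempty (F₁.A j ≅ F₂.A (Fin.cast h j))) := by
  obtain ⟨hn, hagree⟩ := HNFiltration.agreeUpTo_of_iso (Fin.last F₁.n) (Fin.last F₂.n)
    (eqToIso (F₁.obj_last.trans F₂.obj_last.symm))
  have h : F₁.n = F₂.n := by simpa using hn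
  exact ⟨h, fun j => hagree.phase_eq j _ rfl j.isLt,
    fun j => hagree.nonempty_iso_obj j _ rfl (Nat.le_of_lt_succ j.isLt),
    fun j => hagree.nonempty_iso_A j _ rfl j.isLt⟩
end

section
/- Let D be a triangulated category and let Stab(D) be the set of locally finite stability conditions on D. The function d(σ₁, σ₂) = sup over nonzero E ∈ D of max{ |φ⁻_{σ₂}(E) − φ⁻_{σ₁}(E)|, |φ⁺_{σ₂}(E) − φ⁺_{σ₁}(E)|, |log(m_{σ₂}(E)/m_{σ₁}(E))| } ∈ [0, ∞] is a generalized metric on Stab(D): it is symmetric, satisfies the triangle inequality d(σ₁, σ₃) ≤ d(σ₁, σ₂) + d(σ₂, σ₃), and d(σ₁, σ₂) = 0 holds if and only if σ₁ = σ₂. -/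
/-!
Basic definitions: Bridgeland stability conditions on a triangulated category.

The Grothendieck group `K(D)` is encoded implicitly: a group homomorphism `K(D) → ℂ`
is the same thing as a function on objects which is invariant under isomorphism and
additive on distinguished triangles.
-/

open CategoryTheory CategoryTheory.Limits CategoryTheory.Pretriangulated
open scoped ENNReal Classical

universe v u

variable (C : Type u) [Category.{v} C] [HasZeroObject C] [HasShift C ℤ]
  [Preadditive C] [∀ n : ℤ, (CategoryTheory.shiftFunctor C n).Additive] [Pretriangulated C]

/-!
A nonzero object lies in `P φ` exactly when its extreme HN phases both equal `φ`: a
semistable object of phase `ψ` receives a nonzero map from its top HN factor and maps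
nonzero to its bottom one, so Hom-vanishing squeezes all its HN phases to `ψ`. Hence `d`
vanishing forces equal slicings; on a semistable object the central charge is its mass
times `exp (iπφ)`, so the central charges agree on all HN factors and, by additivity
along HN filtrations, everywhere. Symmetry and the triangle inequality hold because `d`
is the supremum over `E` of the sup-distances between the points
`(φ⁻(E), φ⁺(E), log m(E))` of `ℝ³`.
-/

section StabilityMetric

variable {C}

namespace HNFiltration

variable {P : ℝ → Set C} {E : C} (F : HNFiltration C P E)

def top : Fin F.n := ⟨0, F.npos⟩

def bottom : Fin F.n := ⟨F.n - 1, Nat.sub_lt F.npos one_pos⟩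

lemma phase_le_phase_top (i : Fin F.n) : F.phase i ≤ F.phase F.top :=
  (show StrictAnti F.phase from F.phase_anti).antitone (Fin.le_iff_val_le_val.mpr (Nat.zero_le _))

lemma phase_bottom_le_phase (i : Fin F.n) : F.phase F.bottom ≤ F.phase i :=
  (show StrictAnti F.phase from F.phase_anti).antitone
    (Fin.le_iff_val_le_val.mpr (Nat.le_sub_one_of_lt i.isLt))

lemma n_eq_one_of_phase_top_le (h : F.phase F.top ≤ F.phase F.bottom) : F.n = 1 := by
  by_contra hn
  have hlt : F.top < F.bottom := by
    rw [Fin.lt_def]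
    simp only [top, bottom]
    have := F.npos
    omega
  exact (F.phase_anti hlt).not_ge h

lemma top_eq_bottom (h : F.n = 1) : F.top = F.bottom :=
  Fin.ext (by simp [top, bottom, h])

lemma isZero_obj_castSucc_top : IsZero (F.obj F.top.castSucc) :=
  F.obj_zero

lemma obj_succ_bottom : F.obj F.bottom.succ = E := by
  have h : F.bottom.succ = Fin.last F.n := by
    ext
    simp only [bottom, Fin.val_succ, Fin.val_last]
    have := F.npos
    omega
  rw [h, F.obj_last]

lemma nonempty_iso_A_top_of_n_eq_one (h : F.n = 1) : Nonempty (E ≅ F.A F.top) := by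
  obtain ⟨g, k, hT⟩ := F.distinguished F.top
  have : IsIso g := (Triangle.isZero₁_iff_isIso₂ _ hT).mp F.isZero_obj_castSucc_top
  have hE : F.obj F.top.succ = E := by rw [F.top_eq_bottom h, F.obj_succ_bottom]
  exact ⟨eqToIso hE.symm ≪≫ asIso g⟩

end HNFiltration

lemma eq_zero_of_forall_hom_shift_neg_one_eq_zero {D : Type*} [Category D]
    [HasZeroMorphisms D] [HasShift D ℤ] {X B : D} (h : ∀ g : X ⟶ B⟦(-1 : ℤ)⟧, g = 0)
    (f : X⟦(1 : ℤ)⟧ ⟶ B) : f = 0 := by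
  let adj := (shiftEquiv D (1 : ℤ)).toAdjunction
  exact (adj.homEquiv X B).injective ((h _).trans (h _).symm)

namespace StabilityCondition

variable (σ : StabilityCondition C) {E : C}

lemma shift_neg_one_mem_P {A : C} {φ : ℝ} (hA : A ∈ σ.P φ) :
    A⟦(-1 : ℤ)⟧ ∈ σ.P (φ - 1) := by
  obtain ⟨A', hA', ⟨e⟩⟩ := (σ.P_shift (φ - 1) A).mp (by rwa [sub_add_cancel])
  exact σ.P_isoClosed _ ((shiftFunctor C (-1 : ℤ)).mapIso e ≪≫ shiftShiftNeg A' 1).symm hA'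

lemma hom_obj_eq_zero (F : HNFiltration C σ.P E) {B : C} {ψ : ℝ} (hB : B ∈ σ.P ψ)
    (hψ : ∀ i, ψ < F.phase i) (j : Fin (F.n + 1)) (f : F.obj j ⟶ B) : f = 0 := by
  induction j using Fin.induction with
  | zero => exact F.obj_zero.eq_of_src f 0
  | succ i ih =>
    obtain ⟨g, h, hT⟩ := F.distinguished i
    obtain ⟨k, rfl⟩ := Triangle.yoneda_exact₂ _ hT f (ih _)
    rw [show k = 0 from σ.hom_vanishing (hψ i) (F.A_mem i) hB k]
    exact comp_zero

/-- A map into `F.obj i.castSucc` killed by `F.map i` factors through `(F.A i)⟦-1⟧`, whose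
phase is below the top phase. -/
lemma exists_hom_A_top_ne_zero (F : HNFiltration C σ.P E) (i : Fin F.n) :
    ∃ c : F.A F.top ⟶ F.obj i.succ, c ≠ 0 := by
  obtain ⟨k, hk⟩ := i
  induction k with
  | zero =>
    obtain ⟨g, h, hT⟩ := F.distinguished F.top
    have : IsIso g := (Triangle.isZero₁_iff_isIso₂ _ hT).mp F.isZero_obj_castSucc_top
    refine ⟨(asIso g).inv, fun h0 => F.A_nonzero F.top ?_⟩
    rw [IsZero.iff_id_eq_zero, ← (asIso g).inv_hom_id, h0]
    exact zero_comp
  | succ k ih =>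
    obtain ⟨c, hc⟩ := ih (by omega)
    obtain ⟨g, h, hT⟩ := F.distinguished ⟨k + 1, hk⟩
    refine ⟨c ≫ F.map ⟨k + 1, hk⟩, fun h0 => hc ?_⟩
    obtain ⟨l, rfl⟩ := Triangle.coyoneda_exact₂ _ (inv_rot_of_distTriang _ hT) c h0
    have hlt : F.phase ⟨k + 1, hk⟩ - 1 < F.phase F.top := by
      linarith [F.phase_le_phase_top ⟨k + 1, hk⟩]
    rw [show l = 0 from σ.hom_vanishing hlt (F.A_mem _) (σ.shift_neg_one_mem_P (F.A_mem _)) l]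
    exact zero_comp

lemma phase_top_le_of_mem_P (F : HNFiltration C σ.P E) {ψ : ℝ} (hE : E ∈ σ.P ψ) :
    F.phase F.top ≤ ψ := by
  by_contra! hlt
  obtain ⟨c, hc⟩ := σ.exists_hom_A_top_ne_zero F F.bottom
  exact hc (σ.hom_vanishing hlt (F.A_mem _) (by rw [F.obj_succ_bottom]; exact hE) c)

lemma le_phase_bottom_of_mem_P (F : HNFiltration C σ.P E) {ψ : ℝ} (hE : E ∈ σ.P ψ) :
    ψ ≤ F.phase F.bottom := by
  by_contra! hlt
  obtain ⟨g, h, hT⟩ := F.distinguished F.bottom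
  have hg : g = 0 := σ.hom_vanishing hlt (by rw [F.obj_succ_bottom]; exact hE) (F.A_mem _) g
  obtain ⟨l, hl⟩ := Triangle.yoneda_exact₃ _ hT (𝟙 _) (by
    show g ≫ 𝟙 _ = 0
    rw [hg, zero_comp])
  have hl0 : l = 0 := eq_zero_of_forall_hom_shift_neg_one_eq_zero
    (σ.hom_obj_eq_zero F (σ.shift_neg_one_mem_P (F.A_mem _))
      (fun i => by linarith [F.phase_bottom_le_phase i]) _) l
  exact F.A_nonzero F.bottom
    ((IsZero.iff_id_eq_zero _).mpr (hl.trans (by rw [hl0]; exact comp_zero)))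

lemma n_eq_one_of_mem_P (F : HNFiltration C σ.P E) {ψ : ℝ} (hE : E ∈ σ.P ψ) : F.n = 1 :=
  F.n_eq_one_of_phase_top_le
    ((σ.phase_top_le_of_mem_P F hE).trans (σ.le_phase_bottom_of_mem_P F hE))

lemma phiPlus_of_not_isZero (hE : ¬ IsZero E) :
    σ.phiPlus E = (σ.HN E hE).some.phase (σ.HN E hE).some.top :=
  dif_pos hE

lemma phiMinus_of_not_isZero (hE : ¬ IsZero E) :
    σ.phiMinus E = (σ.HN E hE).some.phase (σ.HN E hE).some.bottom :=
  dif_pos hE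

lemma mass_of_not_isZero (hE : ¬ IsZero E) :
    σ.mass E = ∑ j, ‖σ.Z ((σ.HN E hE).some.A j)‖ :=
  dif_pos hE

lemma mem_P_iff (hE : ¬ IsZero E) (φ : ℝ) :
    E ∈ σ.P φ ↔ σ.phiPlus E = φ ∧ σ.phiMinus E = φ := by
  set F := (σ.HN E hE).some
  rw [σ.phiPlus_of_not_isZero hE, σ.phiMinus_of_not_isZero hE]
  constructor
  · intro hφ
    have h₁ := σ.phase_top_le_of_mem_P F hφ
    have h₂ := σ.le_phase_bottom_of_mem_P F hφ
    have h₃ := F.phase_bottom_le_phase F.top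
    constructor <;> linarith
  · rintro ⟨hplus, hminus⟩
    obtain ⟨e⟩ :=
      F.nonempty_iso_A_top_of_n_eq_one (F.n_eq_one_of_phase_top_le (by rw [hplus, hminus]))
    exact σ.P_isoClosed φ e.symm (hplus ▸ F.A_mem F.top)

open ZeroObject in
lemma Z_eq_zero_of_isZero (hE : IsZero E) : σ.Z E = 0 := by
  have h0 : σ.Z (0 : C) = 0 :=
    left_eq_add.mp (σ.Z_additive _ (contractible_distinguished (0 : C)))
  rw [σ.Z_iso_invariant (hE.iso (isZero_zero C)), h0]

lemma norm_Z_pos_of_mem_P {φ : ℝ} (hE : E ∈ σ.P φ) (hE0 : ¬ IsZero E) :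
    0 < ‖σ.Z E‖ := by
  obtain ⟨m, hm, hZ⟩ := σ.P_phase φ E hE hE0
  rw [norm_pos_iff, hZ]
  exact mul_ne_zero (Complex.ofReal_ne_zero.mpr hm.ne') (Complex.exp_ne_zero _)

lemma Z_eq_norm_Z_mul_exp_of_mem_P {φ : ℝ} (hE : E ∈ σ.P φ) (hE0 : ¬ IsZero E) :
    σ.Z E = ‖σ.Z E‖ * Complex.exp ((Real.pi * φ : ℝ) * Complex.I) := by
  obtain ⟨m, hm, hZ⟩ := σ.P_phase φ E hE hE0
  rw [hZ, norm_mul, Complex.norm_exp_ofReal_mul_I, mul_one, Complex.norm_real,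
    Real.norm_of_nonneg hm.le]

lemma mass_pos (hE : ¬ IsZero E) : 0 < σ.mass E := by
  rw [σ.mass_of_not_isZero hE]
  exact Finset.sum_pos (fun j _ => σ.norm_Z_pos_of_mem_P ((σ.HN E hE).some.A_mem j)
    ((σ.HN E hE).some.A_nonzero j)) ⟨(σ.HN E hE).some.top, Finset.mem_univ _⟩

lemma mass_eq_norm_Z_of_mem_P {φ : ℝ} (hE : E ∈ σ.P φ) (hE0 : ¬ IsZero E) :
    σ.mass E = ‖σ.Z E‖ := by
  set F := (σ.HN E hE0).some
  have hn := σ.n_eq_one_of_mem_P F hE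
  have : Subsingleton (Fin F.n) := by rw [hn]; infer_instance
  obtain ⟨e⟩ := F.nonempty_iso_A_top_of_n_eq_one hn
  rw [σ.mass_of_not_isZero hE0, Fintype.sum_subsingleton _ F.top, σ.Z_iso_invariant e]

lemma Z_eq_mass_mul_exp_of_mem_P {φ : ℝ} (hE : E ∈ σ.P φ) (hE0 : ¬ IsZero E) :
    σ.Z E = σ.mass E * Complex.exp ((Real.pi * φ : ℝ) * Complex.I) := by
  rw [σ.mass_eq_norm_Z_of_mem_P hE hE0]
  exact σ.Z_eq_norm_Z_mul_exp_of_mem_P hE hE0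

lemma Z_eq_of_Z_A_eq {P : ℝ → Set C} (τ : StabilityCondition C) (F : HNFiltration C P E)
    (hA : ∀ i, σ.Z (F.A i) = τ.Z (F.A i)) : σ.Z E = τ.Z E := by
  suffices h : ∀ j, σ.Z (F.obj j) = τ.Z (F.obj j) by rw [← F.obj_last]; exact h _
  intro j
  induction j using Fin.induction with
  | zero => rw [σ.Z_eq_zero_of_isZero F.obj_zero, τ.Z_eq_zero_of_isZero F.obj_zero]
  | succ i ih =>
    obtain ⟨g, h, hT⟩ := F.distinguished i
    exact (σ.Z_additive _ hT).trans
      ((congrArg₂ (· + ·) ih (hA i)).trans (τ.Z_additive _ hT).symm)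

lemma P_eq_of_phi_eq (τ : StabilityCondition C)
    (hplus : ∀ E : C, ¬ IsZero E → σ.phiPlus E = τ.phiPlus E)
    (hminus : ∀ E : C, ¬ IsZero E → σ.phiMinus E = τ.phiMinus E) : σ.P = τ.P := by
  ext φ E
  by_cases hE : IsZero E
  · exact ⟨fun _ => τ.P_zero_mem φ E hE, fun _ => σ.P_zero_mem φ E hE⟩
  · rw [σ.mem_P_iff hE, τ.mem_P_iff hE, hplus E hE, hminus E hE]

lemma Z_eq_of_P_eq_of_mass_eq (τ : StabilityCondition C) (hP : σ.P = τ.P)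
    (hm : ∀ E : C, ¬ IsZero E → σ.mass E = τ.mass E) : σ.Z = τ.Z := by
  funext E
  by_cases hE : IsZero E
  · rw [σ.Z_eq_zero_of_isZero hE, τ.Z_eq_zero_of_isZero hE]
  · refine σ.Z_eq_of_Z_A_eq τ (σ.HN E hE).some fun i => ?_
    have hA := (σ.HN E hE).some.A_mem i
    have hA0 := (σ.HN E hE).some.A_nonzero i
    rw [σ.Z_eq_mass_mul_exp_of_mem_P hA hA0,
      τ.Z_eq_mass_mul_exp_of_mem_P (by rw [← hP]; exact hA) hA0, hm _ hA0]

lemma ext {σ τ : StabilityCondition C} (hZ : σ.Z = τ.Z) (hP : σ.P = τ.P) : σ = τ := by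
  cases σ
  cases τ
  congr

/-- The sup-distance in `ℝ × ℝ × ℝ` between two such points is the term of `stabDist`
at `E`. -/
noncomputable def coords (E : C) : ℝ × ℝ × ℝ :=
  (σ.phiMinus E, σ.phiPlus E, Real.log (σ.mass E))

lemma stabDist_eq_iSup_edist (τ : StabilityCondition C) :
    stabDist σ τ = ⨆ E : {E : C // ¬ IsZero E}, edist (τ.coords E.1) (σ.coords E.1) := by
  refine iSup_congr fun E => ?_
  rw [edist_dist, coords, coords, Prod.dist_eq, Prod.dist_eq, Real.dist_eq, Real.dist_eq,
    Real.dist_eq, Real.log_div (τ.mass_pos E.2).ne' (σ.mass_pos E.2).ne']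

lemma stabDist_comm (τ : StabilityCondition C) : stabDist σ τ = stabDist τ σ := by
  simp only [stabDist_eq_iSup_edist, edist_comm]

lemma stabDist_triangle (σ₂ σ₃ : StabilityCondition C) :
    stabDist σ σ₃ ≤ stabDist σ σ₂ + stabDist σ₂ σ₃ := by
  simp only [stabDist_eq_iSup_edist]
  refine iSup_le fun E =>
    ((edist_triangle _ (σ₂.coords E.1) _).trans_eq (add_comm _ _)).trans ?_
  exact add_le_add (le_iSup_of_le E le_rfl) (le_iSup_of_le E le_rfl)

lemma eq_of_coords_eq (τ : StabilityCondition C)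
    (h : ∀ E : C, ¬ IsZero E → σ.coords E = τ.coords E) : σ = τ := by
  simp only [coords, Prod.mk.injEq] at h
  have hP := σ.P_eq_of_phi_eq τ (fun E hE => (h E hE).2.1) (fun E hE => (h E hE).1)
  refine ext (σ.Z_eq_of_P_eq_of_mass_eq τ hP fun E hE => ?_) hP
  exact Real.log_injOn_pos (σ.mass_pos hE) (τ.mass_pos hE) (h E hE).2.2

lemma stabDist_eq_zero_iff (τ : StabilityCondition C) : stabDist σ τ = 0 ↔ σ = τ := by
  rw [stabDist_eq_iSup_edist, ENNReal.iSup_eq_zero]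
  constructor
  · exact fun h => σ.eq_of_coords_eq τ fun E hE => (edist_eq_zero.mp (h ⟨E, hE⟩)).symm
  · rintro rfl E
    exact edist_self _

end StabilityCondition

end StabilityMetric

/-- the function `d` is a generalized ([0,∞]-valued) metric on the set
`Stab(D)` of locally finite stability conditions: it is symmetric, satisfies the
triangle inequality, and vanishes exactly on the diagonal. -/
theorem statement2 :
    (∀ σ τ : Stab C, StabilityCondition.stabDist σ.1 τ.1 = StabilityCondition.stabDist τ.1 σ.1) ∧
    (∀ σ₁ σ₂ σ₃ : Stab C, StabilityCondition.stabDist σ₁.1 σ₃.1 ≤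
      StabilityCondition.stabDist σ₁.1 σ₂.1 + StabilityCondition.stabDist σ₂.1 σ₃.1) ∧
    (∀ σ τ : Stab C, StabilityCondition.stabDist σ.1 τ.1 = 0 ↔ σ = τ) :=
  ⟨fun σ τ => σ.1.stabDist_comm τ.1, fun σ₁ σ₂ σ₃ => σ₁.1.stabDist_triangle σ₂.1 σ₃.1,
    fun σ τ => (σ.1.stabDist_eq_zero_iff τ.1).trans Subtype.ext_iff.symm⟩
end
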